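/- Let q, and elements e_2,…,e_κ, f_2,…,f_κ, t_2^{±},…,t_κ^{±} of an associative algebra satisfy the U_q(gl) relations restricted to: e_i f_j - f_j e_i = δ_{ij}(t_i - t_i^{-1})/(q - q^{-1}), t_i f_j t_i^{-1} = q^{-(α_i, α_j)} f_j, f_i f_j = f_j f_i for |i-j| ≥ 2, and the Serre relations. Let M be a module and v ∈ M with e_i v = 0 for all i, f_i v = 0 for i ≥ 3, and t_2 v = q^c v for some scalar c. Set ω = f_κ ⋯ f_2 v. Then e_i ω = 0 for all 2 ≤ i ≤ κ with i ≠ κ. -/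
import Mathlib


/-- The ordered product `f a * f (a-1) * ⋯ * f b` (equal to `1` when `b > a`). -/
def descProd {A : Type*} [Monoid A] (f : ℕ → A) (a b : ℕ) : A :=
  ((List.range (a + 1 - b)).map (fun j => f (a - j))).prod

/-- The `gl` Cartan pairing `(α_i, α_j)`: `2` if `i = j`, `-1` if `|i-j| = 1`, `0` otherwise. -/
def glPair (i j : ℕ) : ℤ :=
  if i = j then 2 else if i + 1 = j ∨ j + 1 = i then -1 else 0

lemma descProd_succ {A : Type*} [Monoid A] (f : ℕ → A) (a b : ℕ) (h : b ≤ a + 1) :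
    descProd f (a + 1) b = f (a + 1) * descProd f a b := by
  unfold descProd
  rw [show a + 1 + 1 - b = (a + 1 - b) + 1 from by omega, List.range_succ_eq_map]
  simp only [List.map_cons, List.map_map, List.prod_cons, Nat.sub_zero]
  congr 2
  apply List.map_congr_left
  intro j _
  simp only [Function.comp_apply]
  congr 1
  omega

lemma descProd_split {A : Type*} [Monoid A] (f : ℕ → A) (a m b : ℕ)
    (h1 : b ≤ m + 1) (h2 : m ≤ a) :
    descProd f a b = descProd f a (m + 1) * descProd f m b := by
  induction a, h2 using Nat.le_induction with
  | base =>
    have : descProd f m (m + 1) = 1 := by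
      unfold descProd
      simp [show m + 1 - (m + 1) = 0 from by omega]
    rw [this, one_mul]
  | succ a ha ih =>
    rw [descProd_succ f a b (by omega), ih, descProd_succ f a (m + 1) (by omega), mul_assoc]

lemma commute_descProd {A : Type*} [Monoid A] (x : A) (f : ℕ → A) (a b : ℕ)
    (h : ∀ j, b ≤ j → j ≤ a → x * f j = f j * x) : x * descProd f a b = descProd f a b * x := by
  have : Commute x (descProd f a b) := by
    apply Commute.list_prod_right
    intro y hy
    simp only [List.mem_map, List.mem_range] at hy
    obtain ⟨j, hj, rfl⟩ := hy
    exact h _ (by omega) (by omega)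
  exact this.eq

/-- Lemma 4.2 (abstracted): `ω = f_κ ⋯ f_2 v` is annihilated by `e_i` for all
`2 ≤ i < κ`, in any module with `e_i v = 0`, `f_i v = 0` for `i ≥ 3`, `t_2 v = q^c v`. -/
theorem stmt_7 {K A M : Type*} [Field K] [Ring A] [Algebra K A]
    [AddCommGroup M] [Module A M]
    (q : K) (hq : q ≠ 0) (hq2 : q ^ 2 ≠ 1)
    (κ : ℕ) (hκ : 3 ≤ κ)
    (e f t tinv : ℕ → A)
    (ht : ∀ i, 2 ≤ i → i ≤ κ → t i * tinv i = 1 ∧ tinv i * t i = 1)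
    (hef : ∀ i j, 2 ≤ i → i ≤ κ → 2 ≤ j → j ≤ κ →
      e i * f j - f j * e i =
        if i = j then (q - q⁻¹)⁻¹ • (t i - tinv i) else 0)
    (htf : ∀ i j, 2 ≤ i → i ≤ κ → 2 ≤ j → j ≤ κ →
      t i * f j * tinv i = (q ^ (-(glPair i j))) • f j)
    (hserre : ∀ i, 2 ≤ i → i + 1 ≤ κ →
      f i ^ 2 * f (i + 1) - (q + q⁻¹) • (f i * f (i + 1) * f i) + f (i + 1) * f i ^ 2 = 0 ∧
      f (i + 1) ^ 2 * f i - (q + q⁻¹) • (f (i + 1) * f i * f (i + 1)) + f i * f (i + 1) ^ 2 = 0 ∧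
      e i ^ 2 * e (i + 1) - (q + q⁻¹) • (e i * e (i + 1) * e i) + e (i + 1) * e i ^ 2 = 0 ∧
      e (i + 1) ^ 2 * e i - (q + q⁻¹) • (e (i + 1) * e i * e (i + 1)) + e i * e (i + 1) ^ 2 = 0)
    (hcomm : ∀ i j, 2 ≤ i → j ≤ κ → i + 1 < j →
      f i * f j = f j * f i ∧ e i * e j = e j * e i)
    (v : M) (c : ℤ)
    (hev : ∀ i, 2 ≤ i → i ≤ κ → e i • v = 0)
    (hfv : ∀ i, 3 ≤ i → i ≤ κ → f i • v = 0)
    (htv : t 2 • v = (algebraMap K A (q ^ c)) • v) :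
    ∀ i, 2 ≤ i → i < κ → e i • (descProd f κ 2 • v) = 0 := by
  intro i hi2 hiκ
  have hiκ' : i ≤ κ := le_of_lt hiκ
  have hi1κ : i + 1 ≤ κ := hiκ
  set B : A := descProd f (i - 1) 2 with hB
  set a : A := descProd f κ (i + 1 + 1) with ha
  set X : A := (q - q⁻¹)⁻¹ • (t i - tinv i) with hX
  -- splitting of the product
  have hsplit : descProd f κ 2 = a * (f (i + 1) * (f i * B)) := by
    have e1 := descProd_split f κ (i + 1) 2 (by omega) (by omega)
    have e2 := descProd_succ f i 2 (by omega)
    have e3 := descProd_succ f (i - 1) 2 (by omega)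
    rw [show i - 1 + 1 = i from by omega] at e3
    rw [e1, e2, e3]
  -- commutation of e i with products
  have hcea : e i * a = a * e i := by
    apply commute_descProd
    intro j hj1 hj2
    have h := hef i j hi2 hiκ' (by omega) hj2
    rw [if_neg (by omega)] at h
    exact sub_eq_zero.mp h
  have hceB : e i * B = B * e i := by
    apply commute_descProd
    intro j hj1 hj2
    have h := hef i j hi2 hiκ' (by omega) (by omega)
    rw [if_neg (by omega)] at h
    exact sub_eq_zero.mp h
  have hcef1 : e i * f (i + 1) = f (i + 1) * e i := by
    have h := hef i (i + 1) hi2 hiκ' (by omega) hi1κ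
    rw [if_neg (by omega)] at h
    exact sub_eq_zero.mp h
  have hcfB : f (i + 1) * B = B * f (i + 1) := by
    apply commute_descProd
    intro j hj1 hj2
    exact ((hcomm j (i + 1) hj1 hi1κ (by omega)).1).symm
  -- e i past f i
  have h3 : e i * f i = X + f i * e i := by
    have h := hef i i hi2 hiκ' hi2 hiκ'
    rw [if_pos rfl] at h
    rw [hX]
    exact sub_eq_iff_eq_add.mp h
  -- t relations
  have htinv := (ht i hi2 hiκ').2
  have ht1 : t i * f (i + 1) * tinv i = q • f (i + 1) := by
    have h := htf i (i + 1) hi2 hiκ' (by omega) hi1κ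
    rw [show glPair i (i + 1) = -1 from by
      unfold glPair; rw [if_neg (by omega), if_pos (Or.inl rfl)]] at h
    rwa [show -(-1 : ℤ) = 1 from by ring, zpow_one] at h
  have h6 : f (i + 1) * t i = q⁻¹ • (t i * f (i + 1)) := by
    have : t i * f (i + 1) = q • (f (i + 1) * t i) := by
      calc t i * f (i + 1) = t i * f (i + 1) * (tinv i * t i) := by rw [htinv, mul_one]
        _ = (t i * f (i + 1) * tinv i) * t i := by rw [mul_assoc, mul_assoc, mul_assoc]
        _ = (q • f (i + 1)) * t i := by rw [ht1]
        _ = q • (f (i + 1) * t i) := smul_mul_assoc q _ _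
    rw [this, smul_smul, inv_mul_cancel₀ hq, one_smul]
  have h7 : f (i + 1) * tinv i = q • (tinv i * f (i + 1)) := by
    calc f (i + 1) * tinv i = (tinv i * t i) * (f (i + 1) * tinv i) := by rw [htinv, one_mul]
      _ = tinv i * (t i * f (i + 1) * tinv i) := by rw [mul_assoc, mul_assoc]
      _ = tinv i * (q • f (i + 1)) := by rw [ht1]
      _ = q • (tinv i * f (i + 1)) := mul_smul_comm q _ _
  -- key algebra identity
  set W : A := (q - q⁻¹)⁻¹ • (q⁻¹ • (t i * B) - q • (tinv i * B)) with hW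
  have hkey : f (i + 1) * (X * B) = W * f (i + 1) := by
    rw [hX, hW]
    rw [smul_mul_assoc, mul_smul_comm, smul_mul_assoc]
    congr 1
    rw [sub_mul, mul_sub, ← mul_assoc, ← mul_assoc, h6, h7,
      smul_mul_assoc, smul_mul_assoc, mul_assoc, mul_assoc, hcfB,
      ← mul_assoc, ← mul_assoc, sub_mul, smul_mul_assoc, smul_mul_assoc]
  have hmain : e i * (a * (f (i + 1) * (f i * B))) =
      (a * (f (i + 1) * (f i * B))) * e i + (a * W) * f (i + 1) := by
    calc e i * (a * (f (i + 1) * (f i * B)))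
        = a * (e i * (f (i + 1) * (f i * B))) := by
          rw [← mul_assoc, hcea, mul_assoc]
      _ = a * (f (i + 1) * (e i * (f i * B))) := by
          rw [← mul_assoc (e i), hcef1, mul_assoc]
      _ = a * (f (i + 1) * ((X + f i * e i) * B)) := by
          rw [← mul_assoc (e i), h3]
      _ = a * (f (i + 1) * (X * B)) + a * (f (i + 1) * (f i * (B * e i))) := by
          rw [add_mul, mul_add, mul_add, mul_assoc (f i), hceB]
      _ = (a * W) * f (i + 1) + a * (f (i + 1) * (f i * (B * e i))) := by
          rw [hkey, ← mul_assoc]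
      _ = (a * (f (i + 1) * (f i * B))) * e i + (a * W) * f (i + 1) := by
          rw [add_comm]
          simp only [mul_assoc]
  -- finish on the module
  have hev' : e i • v = 0 := hev i hi2 hiκ'
  have hfv' : f (i + 1) • v = 0 := hfv (i + 1) (by omega) hi1κ
  have t1 : (a * (f (i + 1) * (f i * B)) * e i) • v = 0 := by
    rw [mul_smul, hev', smul_zero]
  have t2 : (a * W * f (i + 1)) • v = 0 := by
    rw [mul_smul, hfv', smul_zero]
  rw [hsplit, ← mul_smul, hmain, add_smul, t1, t2, add_zero]
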